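/- Under the stated setup, δ₅ = S₅((r₁, r₂, r₃); λ) − S₅((r₁−1, r₂, r₃+1); λ') satisfies δ₅ ≥ −Σ_{i₂=r₂+1}^{n−r₁−1} a_{i₂} · Σ_{i₃=0}^{n−r₁−1−i₂} binom(r₃+1, i₃) − Σ_{i₂=r₂+1}^{n−r₁} a_{i₂} · C(r₃+α₃, n−r₁−i₂) · Γ(r₁+α₁)/(Γ(r₁+1)·|Γ(α₁)|), where binom(r₃+1, i₃) is the ordinary (natural number) binomial coefficient. -/

import Mathlib

open Finset

/-- Generalized binomial coefficient `C(a,b) = Γ(a+1)/(Γ(b+1)·Γ(a−b+1))`. -/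
noncomputable def genBinom (a b : ℝ) : ℝ :=
  Real.Gamma (a + 1) / (Real.Gamma (b + 1) * Real.Gamma (a - b + 1))

/-- The fundamental Lagrange interpolation polynomial value `l_i(μ)` for
equally spaced nodes of the triangle, degree `n`. -/
noncomputable def lagPoly (n : ℕ) (mu : ℝ × ℝ × ℝ) (i : ℕ × ℕ × ℕ) : ℝ :=
  (Real.Gamma (n * mu.1 + 1) / (i.1.factorial * Real.Gamma (n * mu.1 - i.1 + 1))) *
  (Real.Gamma (n * mu.2.1 + 1) / (i.2.1.factorial * Real.Gamma (n * mu.2.1 - i.2.1 + 1))) *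
  (Real.Gamma (n * mu.2.2 + 1) / (i.2.2.factorial * Real.Gamma (n * mu.2.2 - i.2.2 + 1)))

/-- `S₅((ρ₁,ρ₂,ρ₃); μ) = Σ_{i₂=ρ₂+1}^{n−ρ₁−1} Σ_{i₃=0}^{n−ρ₁−1−i₂} |l_{(n−i₂−i₃, i₂, i₃)}(μ)|`. -/
noncomputable def S5 (n : ℕ) (ρ : ℕ × ℕ × ℕ) (mu : ℝ × ℝ × ℝ) : ℝ :=
  ∑ i₂ ∈ Finset.Icc (ρ.2.1 + 1) (n - ρ.1 - 1), ∑ i₃ ∈ Finset.range (n - ρ.1 - i₂),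
    |lagPoly n mu (n - i₂ - i₃, i₂, i₃)|

/-!
As `S₅` at `λ` is nonnegative, it suffices to bound `S₅` at `λ'` from above. Its factors are the
generalized binomial coefficients `Ring.choose x k`, which `genBinom x k` equals for `x > -1`. For
fixed `i₂` put `m = n - r₁ - i₂ ≤ r₃`, `a = r₁ - 1 + α₁`, `c = r₃ + 1 + α₃` and `g = |choose a r₁|`
(the Gamma quotient of the bound); the inner sum is `∑_{i ≤ m} |choose a (r₁ + m - i)| choose c i`.
Pascal's rule splits its last term `g choose c m` into `g choose (c - 1) m`, which is the second sum
of the bound, and `g choose (c - 1) (m - 1)`. Every other term is at most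
`g (1 - α₁) / 3 · choose (r₃ + 1) i`: for `k > r₁` the ratio `|a - k| / (k + 1)` is at most `1`, so
`|choose a k| ≤ |choose a (r₁ + 1)| = g (1 - α₁) / (r₁ + 1)`, while
`choose c i ≤ choose (r₃ + 2) i ≤ (r₃ + 2) / 3 · choose (r₃ + 1) i` and `r₃ + 2 ≤ r₁`. Finally
`g (4 - α₁) ≤ 3` absorbs `g choose (c - 1) (m - 1)` into `choose (r₃ + 1) (m - 1)`.
-/

namespace Ring

section CharZero

variable {K : Type*} [Field K] [CharZero K]

open Polynomial in
theorem choose_succ_right_eq (x : K) (k : ℕ) :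
    choose x (k + 1) * (k + 1) = choose x k * (x - k) := by
  have hk : ((k + 1).factorial : K) ≠ 0 := Nat.cast_ne_zero.mpr (Nat.factorial_ne_zero _)
  rw [choose_eq_smul, choose_eq_smul, descPochhammer_succ_right]
  simp only [smeval_mul, smeval_sub, smeval_X, smeval_natCast, smul_eq_mul, Nat.factorial_succ]
  push_cast
  field_simp
  simp

open Polynomial in
theorem multichoose_succ_right_eq (x : K) (k : ℕ) :
    multichoose x (k + 1) * (k + 1) = multichoose x k * (x + k) := by
  have h := factorial_nsmul_multichoose_eq_ascPochhammer x (k + 1)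
  rw [ascPochhammer_succ_right, smeval_mul, ← factorial_nsmul_multichoose_eq_ascPochhammer,
    Nat.factorial_succ] at h
  simp only [smeval_add, smeval_X, smeval_natCast, nsmul_eq_mul, pow_one, pow_zero,
    mul_one] at h
  push_cast at h
  apply mul_left_cancel₀ (Nat.cast_ne_zero.mpr (Nat.factorial_ne_zero k) : (k.factorial : K) ≠ 0)
  linear_combination h

end CharZero

variable {K : Type*} [Field K] [LinearOrder K] [IsStrictOrderedRing K]

private theorem abs_le_abs_of_mul_succ_eq {u v y : K} {n : ℕ} (h : u * (n + 1) = v * y)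
    (hy : |y| ≤ n + 1) : |u| ≤ |v| := by
  have hn : (0 : K) < n + 1 := by positivity
  refine le_of_mul_le_mul_right ?_ hn
  calc |u| * (n + 1) = |v| * |y| := by rw [← abs_of_pos hn, ← abs_mul, ← abs_mul, h]
    _ ≤ |v| * (n + 1) := mul_le_mul_of_nonneg_left hy (abs_nonneg v)

theorem antitone_abs_multichoose {x : K} (hx : -1 ≤ x) (hx' : x ≤ 1) :
    Antitone fun k => |multichoose x k| :=
  antitone_nat_of_succ_le fun n => abs_le_abs_of_mul_succ_eq (multichoose_succ_right_eq x n)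
    (abs_le.2 ⟨by linarith [n.cast_nonneg (α := K)], by linarith⟩)

theorem antitoneOn_abs_choose {x : K} {m : ℕ} (hx : -1 ≤ x) (hm : x ≤ 2 * m + 1) :
    AntitoneOn (fun k => |choose x k|) (Set.Ici m) :=
  antitoneOn_nat_Ici_of_succ_le fun n hn => abs_le_abs_of_mul_succ_eq (choose_succ_right_eq x n)
    (abs_le.2 ⟨by linarith [n.cast_nonneg (α := K)], by
      have : (m : K) ≤ n := by exact_mod_cast hn
      linarith⟩)

theorem choose_nonneg {x : K} {k : ℕ} (h : (k : K) - 1 ≤ x) : 0 ≤ choose x k := by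
  induction k with
  | zero => simp
  | succ k ih =>
    push_cast at h
    refine nonneg_of_mul_nonneg_left (b := (k : K) + 1) ?_ (by positivity)
    rw [choose_succ_right_eq]
    exact mul_nonneg (ih (by linarith)) (by linarith)

theorem choose_le_choose {x y : K} {k : ℕ} (h : (k : K) - 1 ≤ x) (hxy : x ≤ y) :
    choose x k ≤ choose y k := by
  induction k with
  | zero => simp
  | succ k ih =>
    push_cast at h
    refine le_of_mul_le_mul_right ?_ (by positivity : (0 : K) < k + 1)
    rw [choose_succ_right_eq, choose_succ_right_eq]
    exact mul_le_mul (ih (by linarith)) (by linarith) (by linarith) (choose_nonneg (by linarith))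

theorem abs_choose_sub_one_add_self_mul_le {s : ℕ} {α : K} (hs : 2 ≤ s) (hα : -1 < α)
    (hα' : α < 1) : |choose ((s : K) - 1 + α) s| * (4 - α) ≤ 3 := by
  have hmc : choose ((s : K) - 1 + α) s = multichoose α s := by
    rw [multichoose_eq]
    congr 1
    ring
  have h₂ : multichoose α 2 = α * (α + 1) / 2 := by
    have h := multichoose_succ_right_eq α 1
    rw [multichoose_one_right, Nat.cast_one, one_add_one_eq_two] at h
    linear_combination h / 2
  have h₂bound : |multichoose α 2| * (4 - α) ≤ 3 := by
    rw [h₂]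
    rcases le_total 0 α with h | h
    · rw [abs_of_nonneg (by positivity)]
      nlinarith [mul_nonneg (sub_nonneg.2 hα'.le) (show 0 ≤ 6 + 2 * α - α ^ 2 by nlinarith)]
    · have hP : 0 ≤ -α * (α + 1) := mul_nonneg (neg_nonneg.2 h) (by linarith)
      have hP' : -α * (α + 1) ≤ 1 / 4 := by nlinarith [sq_nonneg (α + 1 / 2)]
      rw [abs_of_nonpos (by nlinarith)]
      nlinarith [mul_le_mul_of_nonneg_left (show 4 - α ≤ 5 by linarith) hP]
  rw [hmc]
  calc _ ≤ |multichoose α 2| * (4 - α) :=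
        mul_le_mul_of_nonneg_right (antitone_abs_multichoose hα.le hα'.le hs) (by linarith)
    _ ≤ 3 := h₂bound

theorem abs_choose_mul_abs_choose_le {s N i k : ℕ} {α β : K} (hα : -1 < α) (hα' : α < 1)
    (hβ : 0 ≤ β) (hβ' : β < 1) (hsN : N + 2 ≤ s) (hk : s + 1 ≤ k) (hi : i < N) :
    |choose ((s : K) - 1 + α) k| * |choose ((N : K) + 1 + β) i|
      ≤ |choose ((s : K) - 1 + α) s| * (1 - α) / 3 * (N + 1).choose i := by
  set a := (s : K) - 1 + α
  set g := |choose a s|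
  have hs : (N : K) + 2 ≤ s := by exact_mod_cast hsN
  have hiN : (i : K) + 1 ≤ N := by exact_mod_cast hi
  have hnext : |choose a (s + 1)| * (s + 1) = g * (1 - α) := by
    have h := choose_succ_right_eq a s
    rw [show a - s = -(1 - α) by ring] at h
    rw [← abs_of_pos (show (0 : K) < s + 1 by positivity), ← abs_mul, h, abs_mul, abs_neg,
      abs_of_pos (show 0 < 1 - α by linarith)]
  have ha : |choose a k| ≤ |choose a (s + 1)| :=
    antitoneOn_abs_choose (m := s + 1) (by linarith) (by push_cast; linarith)
      (Set.mem_Ici.2 le_rfl) (Set.mem_Ici.2 hk) hk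
  have hnat : (N + 2).choose i * 3 ≤ (N + 1).choose i * (N + 2) := by
    rw [Nat.choose_mul_succ_eq]
    exact Nat.mul_le_mul_left _ (by omega)
  have hc : |choose ((N : K) + 1 + β) i| * 3 ≤ (N + 1).choose i * (N + 2) := by
    have h := choose_le_choose (k := i) (x := (N : K) + 1 + β) (y := ((N + 2 : ℕ) : K))
      (by linarith) (by push_cast; linarith)
    rw [choose_natCast] at h
    rw [abs_of_nonneg (choose_nonneg (by linarith))]
    have : ((N + 2).choose i : K) * 3 ≤ (N + 1).choose i * (N + 2) := by exact_mod_cast hnat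
    linarith
  refine le_of_mul_le_mul_right ?_ (by positivity : (0 : K) < 3 * (s + 1))
  calc |choose a k| * |choose ((N : K) + 1 + β) i| * (3 * (s + 1))
      ≤ |choose a (s + 1)| * |choose ((N : K) + 1 + β) i| * (3 * (s + 1)) := by gcongr
    _ = g * (1 - α) * (|choose ((N : K) + 1 + β) i| * 3) := by rw [← hnext]; ring
    _ ≤ g * (1 - α) * ((N + 1).choose i * (s + 1)) := by
        refine mul_le_mul_of_nonneg_left (hc.trans ?_) (mul_nonneg (abs_nonneg _) (by linarith))
        exact mul_le_mul_of_nonneg_left (by linarith) (Nat.cast_nonneg _)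
    _ = g * (1 - α) / 3 * (N + 1).choose i * (3 * (s + 1)) := by ring

theorem sum_abs_choose_mul_abs_choose_le {s N m : ℕ} {α β : K} (hα : -1 < α) (hα' : α < 1)
    (hβ : 0 ≤ β) (hβ' : β < 1) (hsN : N + 2 ≤ s) (hm : m ≤ N) :
    ∑ i ∈ range (m + 1), |choose ((s : K) - 1 + α) (s + m - i)| * |choose ((N : K) + 1 + β) i|
      ≤ ∑ i ∈ range m, ((N + 1).choose i : K)
        + choose ((N : K) + β) m * |choose ((s : K) - 1 + α) s| := by
  cases m with
  | zero => simp
  | succ k =>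
    have hkN : (k : K) + 1 ≤ N := by exact_mod_cast hm
    have hlast : |choose ((N : K) + 1 + β) (k + 1)|
        = choose ((N : K) + β) k + choose ((N : K) + β) (k + 1) := by
      rw [show (N : K) + 1 + β = (N + β) + 1 by ring, choose_succ_succ]
      exact abs_of_nonneg (add_nonneg (choose_nonneg (by linarith))
        (choose_nonneg (by push_cast; linarith)))
    have hk : choose ((N : K) + β) k ≤ (N + 1).choose k := by
      have h := choose_le_choose (k := k) (x := (N : K) + β) (y := ((N + 1 : ℕ) : K))
        (by linarith) (by push_cast; linarith)
      rwa [choose_natCast] at h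
    have hterms := sum_le_sum (s := range (k + 1)) fun i hi =>
      have hi : i < k + 1 := mem_range.1 hi
      abs_choose_mul_abs_choose_le (i := i) (k := s + (k + 1) - i) hα hα' hβ hβ' hsN (by omega)
        (by omega)
    have hg : |choose ((s : K) - 1 + α) s| * (4 - α) ≤ 3 :=
      abs_choose_sub_one_add_self_mul_le (by omega) hα hα'
    set g := |choose ((s : K) - 1 + α) s|
    have hg₀ : 0 ≤ g := abs_nonneg _
    have hε : g * (1 - α) / 3 ≤ 1 := by nlinarith
    have hrest : ∑ i ∈ range k, g * (1 - α) / 3 * ((N + 1).choose i : K)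
        ≤ ∑ i ∈ range k, ((N + 1).choose i : K) :=
      sum_le_sum fun i _ => mul_le_of_le_one_left (Nat.cast_nonneg _) hε
    have habsorb : (g * (1 - α) / 3 + g) * (N + 1).choose k ≤ (N + 1).choose k :=
      mul_le_of_le_one_left (Nat.cast_nonneg _) (by linarith)
    simp only [sum_range_succ] at hterms ⊢
    rw [Nat.add_sub_cancel, hlast]
    linarith [mul_le_mul_of_nonneg_left hk hg₀]

end Ring

theorem genBinom_natCast (x : ℝ) (k : ℕ) :
    genBinom x k = Real.Gamma (x + 1) / (k.factorial * Real.Gamma (x - k + 1)) := by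
  rw [genBinom, Real.Gamma_nat_eq_factorial]

theorem genBinom_natCast_succ_mul (x : ℝ) (k : ℕ) :
    genBinom x (k + 1 : ℕ) * (k + 1) = genBinom x k * (x - k) := by
  rw [genBinom_natCast, genBinom_natCast, Nat.factorial_succ,
    show x - (k + 1 : ℕ) + 1 = x - k by push_cast; ring]
  by_cases hxk : x - k = 0
  · simp [hxk]
  rw [Real.Gamma_add_one hxk]
  have hk : ((k : ℝ) + 1) ≠ 0 := by positivity
  push_cast
  by_cases hΓ : Real.Gamma (x - k) = 0
  · simp [hΓ]
  field_simp

theorem genBinom_natCast_eq_choose {x : ℝ} (hx : -1 < x) (k : ℕ) :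
    genBinom x k = Ring.choose x k := by
  induction k with
  | zero =>
    rw [Ring.choose_zero_right, genBinom_natCast]
    simp [(Real.Gamma_pos_of_pos (show 0 < x + 1 by linarith)).ne']
  | succ k ih =>
    refine mul_right_cancel₀ (show (k : ℝ) + 1 ≠ 0 by positivity) ?_
    rw [genBinom_natCast_succ_mul, ih, Ring.choose_succ_right_eq]

theorem abs_choose_sub_one_add_self_eq_Gamma_div {s : ℕ} {α : ℝ} (h : 0 < s + α) :
    |Ring.choose ((s : ℝ) - 1 + α) s|
      = Real.Gamma (s + α) / (Real.Gamma (s + 1) * |Real.Gamma α|) := by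
  rw [← genBinom_natCast_eq_choose (by linarith), genBinom, abs_div, abs_mul,
    show (s : ℝ) - 1 + α + 1 = s + α by ring, show (s : ℝ) - 1 + α - s + 1 = α by ring,
    abs_of_pos (Real.Gamma_pos_of_pos h),
    abs_of_pos (Real.Gamma_pos_of_pos (show 0 < (s : ℝ) + 1 by positivity))]

theorem lagPoly_eq (n : ℕ) (μ : ℝ × ℝ × ℝ) (i : ℕ × ℕ × ℕ) :
    lagPoly n μ i = genBinom (n * μ.1) i.1 * genBinom (n * μ.2.1) i.2.1
      * genBinom (n * μ.2.2) i.2.2 := by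
  simp only [lagPoly, genBinom_natCast]

theorem S5_nonneg (n : ℕ) (ρ : ℕ × ℕ × ℕ) (μ : ℝ × ℝ × ℝ) : 0 ≤ S5 n ρ μ :=
  sum_nonneg fun _ _ => sum_nonneg fun _ _ => abs_nonneg _

theorem S5_eq_sum (n : ℕ) (ρ : ℕ × ℕ × ℕ) (μ : ℝ × ℝ × ℝ) :
    S5 n ρ μ = ∑ i₂ ∈ Icc (ρ.2.1 + 1) (n - ρ.1 - 1), |genBinom (n * μ.2.1) i₂|
      * ∑ i₃ ∈ range (n - ρ.1 - i₂),
          |genBinom (n * μ.1) (n - i₂ - i₃ : ℕ)| * |genBinom (n * μ.2.2) i₃| := by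
  simp only [S5, lagPoly_eq, mul_sum, abs_mul]
  exact sum_congr rfl fun _ _ => sum_congr rfl fun _ _ => by ring

theorem S5_le_sum {n r₁ r₂ r₃ : ℕ} {α₁ α₃ b : ℝ} (hr : r₁ + r₂ + r₃ + 1 = n)
    (hα₁ : -1 < α₁) (hα₁' : α₁ < 1) (hα₃ : 0 ≤ α₃) (hα₃' : α₃ < 1) (hr₃₁ : r₃ + 2 ≤ r₁) :
    S5 n (r₁ - 1, r₂, r₃ + 1) (((r₁ : ℝ) - 1 + α₁) / n, b / n, ((r₃ : ℝ) + 1 + α₃) / n)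
      ≤ ∑ i₂ ∈ Icc (r₂ + 1) (n - r₁), |genBinom b i₂|
        * (∑ i₃ ∈ range (n - r₁ - i₂), ((r₃ + 1).choose i₃ : ℝ)
          + Ring.choose ((r₃ : ℝ) + α₃) (n - r₁ - i₂) * |Ring.choose ((r₁ : ℝ) - 1 + α₁) r₁|) := by
  have hn : (n : ℝ) ≠ 0 := by rw [← hr]; positivity
  have hr₁ : (r₃ : ℝ) + 2 ≤ r₁ := by exact_mod_cast hr₃₁
  rw [S5_eq_sum]
  dsimp only
  rw [show n - (r₁ - 1) - 1 = n - r₁ by omega]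
  refine sum_le_sum fun i₂ hi₂ => ?_
  rw [mem_Icc] at hi₂
  obtain ⟨m, hm⟩ : ∃ m, n - r₁ = i₂ + m := ⟨n - r₁ - i₂, by omega⟩
  simp only [mul_div_cancel₀ _ hn]
  rw [show n - (r₁ - 1) - i₂ = m + 1 by omega, show n - i₂ = r₁ + m by omega,
    show n - r₁ - i₂ = m by omega]
  simp only [genBinom_natCast_eq_choose (show -1 < (r₁ : ℝ) - 1 + α₁ by linarith),
    genBinom_natCast_eq_choose (show -1 < (r₃ : ℝ) + 1 + α₃ by linarith)]
  exact mul_le_mul_of_nonneg_left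
    (Ring.sum_abs_choose_mul_abs_choose_le (m := m) hα₁ hα₁' hα₃ hα₃' hr₃₁ (by omega))
    (abs_nonneg _)

theorem sum_Icc_mul_sum_range_sub_eq {R : Type*} [NonUnitalNonAssocSemiring R] (f g : ℕ → R)
    (a N : ℕ) :
    ∑ i ∈ Icc a (N - 1), f i * ∑ j ∈ range (N - i), g j
      = ∑ i ∈ Icc a N, f i * ∑ j ∈ range (N - i), g j := by
  refine sum_subset (Icc_subset_Icc_right (Nat.sub_le N 1)) fun i hi hi' => ?_
  simp only [mem_Icc] at hi hi'
  rw [show N - i = 0 by omega, sum_range_zero, mul_zero]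

theorem delta5_lower_bound_general (n : ℕ) (r₁ r₂ r₃ : ℕ)
    (hr : r₁ + r₂ + r₃ = n - 1) (α₁ α₂ α₃ : ℝ)
    (hα₁ : -1 < α₁) (hα₁' : α₁ < 1)
    (hα₃ : 0 ≤ α₃) (hα₃' : α₃ < 1)
    (h13 : (r₁:ℝ) - 1 + α₁ ≥ (r₃:ℝ) + 1 + α₃) :
    S5 n (r₁, r₂, r₃) (((r₁:ℝ) + α₁)/n, ((r₂:ℝ) + α₂)/n, ((r₃:ℝ) + α₃)/n)
      - S5 n (r₁ - 1, r₂, r₃ + 1)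
          (((r₁:ℝ) - 1 + α₁)/n, ((r₂:ℝ) + α₂)/n, ((r₃:ℝ) + 1 + α₃)/n)
      ≥ -(∑ i₂ ∈ Finset.Icc (r₂ + 1) (n - r₁ - 1),
            |Real.Gamma ((r₂:ℝ) + α₂ + 1) / (i₂.factorial * Real.Gamma ((r₂:ℝ) + α₂ + 1 - i₂))|
              * ∑ i₃ ∈ Finset.range (n - r₁ - i₂), ((r₃ + 1).choose i₃ : ℝ))
        - ∑ i₂ ∈ Finset.Icc (r₂ + 1) (n - r₁),
            |Real.Gamma ((r₂:ℝ) + α₂ + 1) / (i₂.factorial * Real.Gamma ((r₂:ℝ) + α₂ + 1 - i₂))|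
              * genBinom ((r₃:ℝ) + α₃) ((n:ℝ) - r₁ - i₂)
              * (Real.Gamma ((r₁:ℝ) + α₁) / (Real.Gamma ((r₁:ℝ) + 1) * |Real.Gamma α₁|)) := by
  have hr₃₁ : r₃ + 2 ≤ r₁ := by
    have : (r₃ : ℝ) + 1 < r₁ := by linarith
    exact_mod_cast this
  rw [← abs_choose_sub_one_add_self_eq_Gamma_div (by linarith), sum_Icc_mul_sum_range_sub_eq,
    ge_iff_le, neg_sub_left, neg_le_sub_iff_le_add, ← sum_add_distrib]
  refine le_add_of_nonneg_of_le (S5_nonneg _ _ _)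
    ((S5_le_sum (by omega) hα₁ hα₁' hα₃ hα₃' hr₃₁).trans_eq (sum_congr rfl fun i₂ hi₂ => ?_))
  rw [mem_Icc] at hi₂
  have hcast : (n : ℝ) - r₁ - i₂ = (n - r₁ - i₂ : ℕ) := by
    rw [Nat.cast_sub (by omega), Nat.cast_sub (by omega)]
  rw [genBinom_natCast, add_sub_right_comm _ (1 : ℝ), hcast,
    genBinom_natCast_eq_choose (by linarith)]
  ring

theorem delta5_lower_bound (n : ℕ) (hn : 4 ≤ n) (r₁ r₂ r₃ : ℕ)
    (hr : r₁ + r₂ + r₃ = n - 1) (α₁ α₂ α₃ : ℝ)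
    (hα₁ : -1 < α₁) (hα₁' : α₁ < 1)
    (hα₂ : 0 ≤ α₂) (hα₂' : α₂ < 1) (hα₃ : 0 ≤ α₃) (hα₃' : α₃ < 1)
    (hs : α₁ + α₂ + α₃ = 1)
    (h12 : (r₁:ℝ) - 1 + α₁ ≥ (r₂:ℝ) + α₂) (h13 : (r₁:ℝ) - 1 + α₁ ≥ (r₃:ℝ) + 1 + α₃) :
    S5 n (r₁, r₂, r₃) (((r₁:ℝ) + α₁)/n, ((r₂:ℝ) + α₂)/n, ((r₃:ℝ) + α₃)/n)
      - S5 n (r₁ - 1, r₂, r₃ + 1)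
          (((r₁:ℝ) - 1 + α₁)/n, ((r₂:ℝ) + α₂)/n, ((r₃:ℝ) + 1 + α₃)/n)
      ≥ -(∑ i₂ ∈ Finset.Icc (r₂ + 1) (n - r₁ - 1),
            |Real.Gamma ((r₂:ℝ) + α₂ + 1) / (i₂.factorial * Real.Gamma ((r₂:ℝ) + α₂ + 1 - i₂))|
              * ∑ i₃ ∈ Finset.range (n - r₁ - i₂), ((r₃ + 1).choose i₃ : ℝ))
        - ∑ i₂ ∈ Finset.Icc (r₂ + 1) (n - r₁),
            |Real.Gamma ((r₂:ℝ) + α₂ + 1) / (i₂.factorial * Real.Gamma ((r₂:ℝ) + α₂ + 1 - i₂))|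
              * genBinom ((r₃:ℝ) + α₃) ((n:ℝ) - r₁ - i₂)
              * (Real.Gamma ((r₁:ℝ) + α₁) / (Real.Gamma ((r₁:ℝ) + 1) * |Real.Gamma α₁|)) :=
  delta5_lower_bound_general n r₁ r₂ r₃ hr α₁ α₂ α₃ hα₁ hα₁' hα₃ hα₃' h13
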